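/- Let G be a graph that is vertex-minimal subject to: G is planar, subcubic, contains no cycles of length 4 through 8, and G^2 is not 6-choosable. Then no two vertices of degree 2 in G are adjacent. -/

import Mathlib

open SimpleGraph

variable {V : Type*}

/-- The square of a graph: join two distinct vertices at distance at most 2. -/
def SimpleGraph.square (G : SimpleGraph V) : SimpleGraph V where
  Adj u v := u ≠ v ∧ (G.Adj u v ∨ ∃ w, G.Adj u w ∧ G.Adj w v)
  symm := by
    constructor
    rintro u v ⟨hne, h | ⟨w, hw1, hw2⟩⟩
    · exact ⟨hne.symm, Or.inl h.symm⟩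
    · exact ⟨hne.symm, Or.inr ⟨w, hw2.symm, hw1.symm⟩⟩
  loopless := ⟨fun v h => h.1 rfl⟩

/-- `k`-choosability: every list assignment with lists of size at least `k`
admits a proper coloring from the lists. -/
def SimpleGraph.Choosable (G : SimpleGraph V) (k : ℕ) : Prop :=
  ∀ L : V → Finset ℕ, (∀ v, k ≤ (L v).card) →
    ∃ f : V → ℕ, (∀ v, f v ∈ L v) ∧ ∀ u v, G.Adj u v → f u ≠ f v

/-- `H` is a minor of `G`: there are nonempty, pairwise disjoint, connected branch
sets in `G` realizing the adjacencies of `H`. -/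
def SimpleGraph.HasMinor {W : Type*} (G : SimpleGraph V) (H : SimpleGraph W) : Prop :=
  ∃ f : W → Set V,
    (∀ w, (f w).Nonempty) ∧
    (∀ w, (G.induce (f w)).Connected) ∧
    (∀ w₁ w₂, w₁ ≠ w₂ → Disjoint (f w₁) (f w₂)) ∧
    (∀ w₁ w₂, H.Adj w₁ w₂ → ∃ a ∈ f w₁, ∃ b ∈ f w₂, G.Adj a b)

/-- Planarity via Wagner's theorem: no `K₅` minor and no `K₃,₃` minor. -/
def SimpleGraph.Planar (G : SimpleGraph V) : Prop :=
  ¬ G.HasMinor (completeGraph (Fin 5)) ∧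
    ¬ G.HasMinor (completeBipartiteGraph (Fin 3) (Fin 3))

/-- `G` contains no cycles of length 4 through 8. -/
def SimpleGraph.NoCycle4To8 (G : SimpleGraph V) : Prop :=
  ∀ (v : V) (c : G.Walk v v), c.IsCycle → ¬ (4 ≤ c.length ∧ c.length ≤ 8)

/-! Let `x`, `y` be adjacent 2-vertices. Each of them has only one neighbour outside `{x, y}`,
so no path of length two through `x` or `y` joins two other vertices: the square of `G - {x, y}`
is `G²` restricted to the other vertices, and an `L`-coloring of it (given by minimality) is a
partial coloring of `G²`. In `G²` each of `x`, `y` has at most `2 + 3 = 5` neighbours, so both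
can be colored greedily from lists of size 6. -/

namespace SimpleGraph

variable {G H : SimpleGraph V}

def IsListColoringOn (H : SimpleGraph V) (L : V → Finset ℕ) (s : Set V) (f : V → ℕ) : Prop :=
  (∀ v ∈ s, f v ∈ L v) ∧ ∀ u ∈ s, ∀ v ∈ s, H.Adj u v → f u ≠ f v

theorem Choosable.mono_left {k : ℕ} (hle : G ≤ H) (h : H.Choosable k) : G.Choosable k :=
  fun L hL => (h L hL).imp fun _ ⟨hmem, hadj⟩ => ⟨hmem, fun u v huv => hadj u v (hle huv)⟩

theorem Choosable.exists_isListColoringOn {s : Set V} {k : ℕ} (h : (H.induce s).Choosable k)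
    (L : V → Finset ℕ) (hL : ∀ v, k ≤ (L v).card) : ∃ f, H.IsListColoringOn L s f := by
  classical
  obtain ⟨g, hgL, hgadj⟩ := h (fun v => L v) fun v => hL v
  refine ⟨fun v => if hv : v ∈ s then g ⟨v, hv⟩ else 0, fun v hv => ?_, fun u hu v hv huv => ?_⟩
  · simpa only [dif_pos hv] using hgL ⟨v, hv⟩
  · simpa only [dif_pos hu, dif_pos hv] using hgadj ⟨u, hu⟩ ⟨v, hv⟩ huv

theorem IsListColoringOn.exists_update [DecidableEq V] {L : V → Finset ℕ} {s : Set V}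
    {f : V → ℕ} (hf : H.IsListColoringOn L s f) (v : V) [Fintype (H.neighborSet v)]
    (hv : H.degree v < (L v).card) :
    ∃ c, H.IsListColoringOn L (insert v s) (Function.update f v c) := by
  have hcard : ((H.neighborFinset v).image f).card < (L v).card :=
    (Finset.card_image_le.trans_eq (H.card_neighborFinset_eq_degree v)).trans_lt hv
  obtain ⟨c, hcL, hcf⟩ := Finset.exists_mem_notMem_of_card_lt_card hcard
  have hnbr : ∀ w, H.Adj v w → f w ≠ c := fun w hw hfw =>
    hcf (Finset.mem_image.mpr ⟨w, (H.mem_neighborFinset v w).mpr hw, hfw⟩)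
  refine ⟨c, fun w hw => ?_, fun u hu w hw huw => ?_⟩
  · rcases eq_or_ne w v with rfl | hwv
    · simpa using hcL
    · rw [Function.update_of_ne hwv]
      exact hf.1 w (hw.resolve_left hwv)
  · rcases eq_or_ne u v with rfl | huv
    · rw [Function.update_self, Function.update_of_ne huw.ne.symm]
      exact (hnbr w huw).symm
    rcases eq_or_ne w v with rfl | hwv
    · rw [Function.update_self, Function.update_of_ne huv]
      exact hnbr u huw.symm
    rw [Function.update_of_ne huv, Function.update_of_ne hwv]
    exact hf.2 u (hu.resolve_left huv) w (hw.resolve_left hwv) huw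

theorem induce_square_le_square_induce {s : Set V}
    (hs : ∀ w ∉ s, ∀ u ∈ s, ∀ v ∈ s, G.Adj w u → G.Adj w v → u = v) :
    G.square.induce s ≤ (G.induce s).square := by
  rintro u v ⟨huv, hadj | ⟨w, hwu, hwv⟩⟩
  · exact ⟨fun h => huv (congrArg Subtype.val h), Or.inl hadj⟩
  · by_cases hw : w ∈ s
    · exact ⟨fun h => huv (congrArg Subtype.val h), Or.inr ⟨⟨w, hw⟩, hwu, hwv⟩⟩
    · exact absurd (hs w hw u u.2 v v.2 hwu.symm hwv) huv

section Degree

variable [Fintype V] [DecidableRel G.Adj]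

theorem eq_of_adj_of_degree_eq_two {x y u v : V} (hx : G.degree x = 2) (hxy : G.Adj x y)
    (hxu : G.Adj x u) (hxv : G.Adj x v) (huy : u ≠ y) (hvy : v ≠ y) : u = v := by
  classical
  by_contra huv
  have hsub : ({y, u, v} : Finset V) ⊆ G.neighborFinset x := by
    simp [Finset.insert_subset_iff, hxy, hxu, hxv]
  have := Finset.card_le_card hsub
  rw [Finset.card_insert_of_notMem (by simp [huy.symm, hvy.symm]),
    Finset.card_pair huv, card_neighborFinset_eq_degree] at this
  omega

theorem degree_square_le_sum_degree [DecidableEq V] (v : V) [Fintype (G.square.neighborSet v)] :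
    G.square.degree v ≤ ∑ w ∈ G.neighborFinset v, G.degree w := by
  have hsub : G.square.neighborFinset v ⊆
      (G.neighborFinset v).biUnion fun w => insert w ((G.neighborFinset w).erase v) := by
    rintro u hu
    obtain ⟨hvu, hadj | ⟨w, hvw, hwu⟩⟩ := (G.square.mem_neighborFinset v u).mp hu
    · exact Finset.mem_biUnion.mpr ⟨u, by simpa using hadj, Finset.mem_insert_self _ _⟩
    · refine Finset.mem_biUnion.mpr ⟨w, by simpa using hvw, ?_⟩
      simp [hwu, hvu.symm]
  rw [← card_neighborFinset_eq_degree]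
  refine (Finset.card_le_card hsub).trans (Finset.card_biUnion_le.trans
    (Finset.sum_le_sum fun w hw => (Finset.card_insert_le _ _).trans ?_))
  rw [Finset.card_erase_of_mem (by simpa [adj_comm] using hw), card_neighborFinset_eq_degree]
  have : 0 < G.degree w := G.degree_pos_iff_exists_adj w |>.mpr ⟨v, by simpa [adj_comm] using hw⟩
  omega

theorem sum_degree_neighborFinset_le {Δ : ℕ} (hΔ : ∀ v, G.degree v ≤ Δ) {x y : V}
    (hxy : G.Adj x y) :
    ∑ w ∈ G.neighborFinset x, G.degree w ≤ G.degree y + (G.degree x - 1) * Δ := by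
  classical
  have hy : y ∈ G.neighborFinset x := by simpa using hxy
  rw [← Finset.add_sum_erase _ _ hy]
  gcongr
  calc ∑ w ∈ (G.neighborFinset x).erase y, G.degree w
      ≤ ((G.neighborFinset x).erase y).card • Δ := Finset.sum_le_card_nsmul _ _ _ fun w _ => hΔ w
    _ = (G.degree x - 1) * Δ := by
      rw [Finset.card_erase_of_mem hy, card_neighborFinset_eq_degree, smul_eq_mul]

end Degree

end SimpleGraph

theorem min_counterexample_no_adjacent_two_vertices_general
    [Fintype V] (G : SimpleGraph V) [DecidableRel G.Adj]
    (hsubcubic : ∀ v, G.degree v ≤ 3)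
    (hnot : ¬ G.square.Choosable 6)
    (hmin : ∀ s : Set V, s ≠ Set.univ → ((G.induce s).square).Choosable 6) :
    ¬ ∃ x y : V, G.degree x = 2 ∧ G.degree y = 2 ∧ G.Adj x y := by
  classical
  rintro ⟨x, y, hx, hy, hxy⟩
  refine hnot fun L hL => ?_
  set s : Set V := {x, y}ᶜ
  have hmem : ∀ {u}, u ∈ s ↔ u ≠ x ∧ u ≠ y := by simp [s]
  have hsquare : G.square.induce s ≤ (G.induce s).square := by
    refine induce_square_le_square_induce fun w hw u hu v hv hwu hwv => ?_
    rw [hmem, not_and_or, not_ne_iff, not_ne_iff] at hw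
    rw [hmem] at hu hv
    obtain rfl | rfl := hw
    · exact eq_of_adj_of_degree_eq_two hx hxy hwu hwv hu.2 hv.2
    · exact eq_of_adj_of_degree_eq_two hy hxy.symm hwu hwv hu.1 hv.1
  have hdeg : ∀ {a b}, G.degree a = 2 → G.degree b = 2 → G.Adj a b →
      G.square.degree a < (L a).card := by
    intro a b ha hb hab
    have hle := (degree_square_le_sum_degree a).trans (sum_degree_neighborFinset_le hsubcubic hab)
    rw [ha, hb] at hle
    linarith [hL a]
  have hs : s ≠ Set.univ := (Set.ne_univ_iff_exists_notMem s).mpr ⟨x, by simp [hmem]⟩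
  obtain ⟨f, hf⟩ := ((hmin s hs).mono_left hsquare).exists_isListColoringOn L hL
  obtain ⟨cy, hfy⟩ := hf.exists_update y (hdeg hy hx hxy.symm)
  obtain ⟨cx, hfx⟩ := hfy.exists_update x (hdeg hx hy hxy)
  have huniv : insert x (insert y s) = Set.univ := by ext; simp [s]; tauto
  rw [huniv] at hfx
  exact ⟨_, fun v => hfx.1 v trivial, fun u v huv => hfx.2 u trivial v trivial huv⟩

/-- Claim 3.1(3): in a vertex-minimal subcubic planar graph with no 4- to 8-cycles whose
square is not 6-choosable (minimality: deleting any nonempty set of vertices yields an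
induced subgraph whose square is 6-choosable), no two vertices of degree 2 are adjacent. -/
theorem min_counterexample_no_adjacent_two_vertices
    [Fintype V] [DecidableEq V] (G : SimpleGraph V) [DecidableRel G.Adj]
    (hplanar : G.Planar)
    (hsubcubic : ∀ v, G.degree v ≤ 3)
    (hcycles : G.NoCycle4To8)
    (hnot : ¬ G.square.Choosable 6)
    (hmin : ∀ s : Set V, s ≠ Set.univ → ((G.induce s).square).Choosable 6) :
    ¬ ∃ x y : V, G.degree x = 2 ∧ G.degree y = 2 ∧ G.Adj x y :=
  min_counterexample_no_adjacent_two_vertices_general G hsubcubic hnot hmin
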